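/- arXiv:2201.00980 — 2 statements merged into one kernel-verified Lean document; each statement's English description precedes it below -/
import Mathlib

section
/- Let X be a d-dimensional complex vector space, n ≥ d, τ_1,…,τ_n ∈ X, f_1,…,f_n ∈ X* with f_j(τ_j) = 1 for all j, and suppose the frame operator S x = Σ_j f_j(x) τ_j is diagonalizable with nonnegative real eigenvalues. Then for every real p with 2 < p < ∞, Σ_{1 ≤ j,k ≤ n} |f_j(τ_k) f_k(τ_j)|^{p/2} ≥ n(n−1) ((n−d)/(d(n−1)))^{p/2} + n. -/
/-!
The traces of the frame operator and of its square are `tr S = ∑ⱼ fⱼ(τⱼ) = n` and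
`tr S² = ∑ⱼₖ fⱼ(τₖ) fₖ(τⱼ)`. Computed in the eigenbasis they are `∑ λᵢ` and `∑ λᵢ²`, so
Cauchy–Schwarz over the `d` real eigenvalues gives `n² / d ≤ ∑ λᵢ² ≤ ∑ⱼₖ |fⱼ(τₖ) fₖ(τⱼ)|`.
The `n` diagonal terms equal `1`, so the `n(n-1)` off-diagonal terms have mean at least
`(n - d) / (d(n - 1))`, and the power-mean inequality for the exponent `p/2 ≥ 1` transfers this
bound to their `p/2`-th powers.
-/

open Finset

namespace LinearMap

variable {R M ι : Type*} [CommRing R] [AddCommGroup M] [Module R M] [Fintype ι]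

lemma trace_eq_sum_of_apply_basis_eq_smul [DecidableEq ι] (b : Module.Basis ι R M)
    (S : Module.End R M) (μ : ι → R) (hS : ∀ i, S (b i) = μ i • b i) : trace R M S = ∑ i, μ i := by
  have : toMatrix b b S = Matrix.diagonal μ := by
    ext i j
    rcases eq_or_ne i j with rfl | hij
    · simp [toMatrix_apply, hS]
    · simp [toMatrix_apply, hS, hij]
  rw [trace_eq_matrix_trace R b, this, Matrix.trace_diagonal]

variable [Module.Free R M] [Module.Finite R M]

lemma trace_smulRight_mul_smulRight (f g : Module.Dual R M) (x y : M) :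
    trace R M (f.smulRight x * g.smulRight y) = f y * g x := by
  have : f.smulRight x * g.smulRight y = g.smulRight (f y • x) := by
    ext z
    simp [smul_smul, mul_comm]
  simp [this]

lemma trace_sum_smulRight (f : ι → Module.Dual R M) (τ : ι → M) :
    trace R M (∑ j, (f j).smulRight (τ j)) = ∑ j, f j (τ j) := by
  simp

lemma trace_sq_sum_smulRight (f : ι → Module.Dual R M) (τ : ι → M) :
    trace R M ((∑ j, (f j).smulRight (τ j)) ^ 2) = ∑ j, ∑ k, f j (τ k) * f k (τ j) := by
  simp only [sq, sum_mul_sum, map_sum, trace_smulRight_mul_smulRight]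

end LinearMap

lemma card_mul_rpow_le_sum_rpow {ι : Type*} (s : Finset ι) (a : ι → ℝ)
    (ha : ∀ i ∈ s, 0 ≤ a i) {c q : ℝ} (hc : 0 ≤ c) (hq : 1 ≤ q) (hsum : #s * c ≤ ∑ i ∈ s, a i) :
    #s * c ^ q ≤ ∑ i ∈ s, a i ^ q := by
  rcases s.eq_empty_or_nonempty with rfl | hs
  · simp
  have hN : (0 : ℝ) < #s := by exact_mod_cast hs.card_pos
  calc (#s : ℝ) * c ^ q = (#s : ℝ) ^ (1 - q) * (#s * c) ^ q := by
        rw [Real.mul_rpow hN.le hc, ← mul_assoc, ← Real.rpow_add hN]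
        simp
    _ ≤ (#s : ℝ) ^ (1 - q) * (∑ i ∈ s, a i) ^ q := by gcongr
    _ ≤ (#s : ℝ) ^ (1 - q) * ((#s : ℝ) ^ (q - 1) * ∑ i ∈ s, a i ^ q) := by
        gcongr
        exact Real.rpow_sum_le_const_mul_sum_rpow_of_nonneg s hq ha
    _ = ∑ i ∈ s, a i ^ q := by
        rw [← mul_assoc, ← Real.rpow_add hN]
        simp

lemma sum_sum_eq_card_add_sum_offDiag {ι : Type*} [Fintype ι] [DecidableEq ι]
    (A : ι → ι → ℝ) (hA : ∀ j, A j j = 1) :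
    ∑ j, ∑ k, A j k = Fintype.card ι + ∑ jk ∈ univ.offDiag, A jk.1 jk.2 := by
  rw [← sum_product' (f := A), ← diag_union_offDiag, sum_union (disjoint_diag_offDiag _)]
  simp [hA]

lemma card_mul_card_sub_one_mul_rpow_add_card_le_sum_sum_rpow {ι : Type*} [Fintype ι]
    (A : ι → ι → ℝ) (hA0 : ∀ j k, 0 ≤ A j k) (hA : ∀ j, A j j = 1) {c q : ℝ} (hc : 0 ≤ c)
    (hq : 1 ≤ q)
    (hsum : Fintype.card ι * (Fintype.card ι - 1) * c + Fintype.card ι ≤ ∑ j, ∑ k, A j k) :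
    Fintype.card ι * (Fintype.card ι - 1) * c ^ q + Fintype.card ι ≤ ∑ j, ∑ k, A j k ^ q := by
  classical
  have hcard :
      (#(univ.offDiag : Finset (ι × ι)) : ℝ) = Fintype.card ι * (Fintype.card ι - 1) := by
    rw [offDiag_card, card_univ, Nat.cast_sub (Nat.le_mul_self _)]
    push_cast
    ring
  rw [sum_sum_eq_card_add_sum_offDiag A hA] at hsum
  rw [sum_sum_eq_card_add_sum_offDiag _ (fun j => by simp [hA]), ← hcard]
  linarith [card_mul_rpow_le_sum_rpow univ.offDiag (fun jk => A jk.1 jk.2)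
    (fun jk _ => hA0 jk.1 jk.2) hc hq (by rw [hcard]; linarith)]

lemma mul_sub_one_mul_div_add_eq_sq_div {d n : ℕ} (hd1 : 1 ≤ d) (hdn : d ≤ n) :
    (n : ℝ) * (n - 1) * ((n - d) / (d * (n - 1))) + n = n ^ 2 / d := by
  rcases eq_or_ne n 1 with rfl | hn
  · obtain rfl : d = 1 := by omega
    norm_num
  have : (n : ℝ) - 1 ≠ 0 := sub_ne_zero.2 (by exact_mod_cast hn)
  field_simp
  ring

theorem welch_pth_power_general {X : Type*} [AddCommGroup X] [Module ℂ X]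
    (d n : ℕ) (hd1 : 1 ≤ d) (hdn : d ≤ n)
    (τ : Fin n → X) (f : Fin n → Module.Dual ℂ X)
    (hone : ∀ j, f j (τ j) = 1)
    (S : X →ₗ[ℂ] X) (hS : S = ∑ j, LinearMap.smulRight (f j) (τ j))
    (hdiag : ∃ (b : Module.Basis (Fin d) ℂ X) (lam : Fin d → ℝ),
      (∀ i, 0 ≤ lam i) ∧ ∀ i, S (b i) = (lam i : ℂ) • b i)
    (p : ℝ) (hp : 2 < p) :
    (n : ℝ) * ((n : ℝ) - 1) * (((n : ℝ) - d) / (d * ((n : ℝ) - 1))) ^ (p / 2) + n ≤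
      ∑ j, ∑ k, ‖f j (τ k) * f k (τ j)‖ ^ (p / 2) := by
  obtain ⟨b, lam, -, hlam⟩ := hdiag
  have := Module.Finite.of_basis b
  have htrace : ∑ i, (lam i : ℂ) = n := by
    rw [← LinearMap.trace_eq_sum_of_apply_basis_eq_smul b S _ hlam, hS,
      LinearMap.trace_sum_smulRight]
    simp [hone]
  have htrace_sq : ∑ i, (lam i : ℂ) ^ 2 = ∑ j, ∑ k, f j (τ k) * f k (τ j) := by
    rw [← LinearMap.trace_sq_sum_smulRight, ← hS,
      LinearMap.trace_eq_sum_of_apply_basis_eq_smul b (S ^ 2) (fun i => (lam i : ℂ) ^ 2)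
        fun i => by rw [sq, Module.End.mul_apply, hlam, map_smul, hlam, smul_smul, sq]]
  have hCS : (n : ℝ) ^ 2 / d ≤ ∑ i, lam i ^ 2 := by
    have hsum : ∑ i, lam i = n := by exact_mod_cast htrace
    rw [div_le_iff₀ (by positivity), ← hsum, mul_comm]
    simpa using sq_sum_le_card_mul_sum_sq (s := univ) (f := lam)
  have hnorm : ∑ i, lam i ^ 2 ≤ ∑ j, ∑ k, ‖f j (τ k) * f k (τ j)‖ := calc
    ∑ i, lam i ^ 2 = ‖∑ j, ∑ k, f j (τ k) * f k (τ j)‖ := by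
      rw [← htrace_sq]
      norm_cast
      exact (Real.norm_of_nonneg (by positivity)).symm
    _ ≤ _ := (norm_sum_le _ _).trans (sum_le_sum fun j _ => norm_sum_le _ _)
  have hc : 0 ≤ ((n : ℝ) - d) / (d * (n - 1)) := by
    have : (1 : ℝ) ≤ n := by exact_mod_cast hd1.trans hdn
    exact div_nonneg (by simpa using hdn) (by nlinarith)
  simpa using card_mul_card_sub_one_mul_rpow_add_card_le_sum_sum_rpow
    (fun j k => ‖f j (τ k) * f k (τ j)‖) (fun _ _ => norm_nonneg _) (by simp [hone]) hc
    (by linarith) (by simpa [mul_sub_one_mul_div_add_eq_sq_div hd1 hdn] using hCS.trans hnorm)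

/-- p-th power Welch bound: if `f j (τ j) = 1` for all `j` and the frame operator is
diagonalizable with nonnegative real eigenvalues, then for `2 < p < ∞`,
`∑_{j,k} |f j (τ k) f k (τ j)|^(p/2) ≥ n(n-1)((n-d)/(d(n-1)))^(p/2) + n`. -/
theorem welch_pth_power {X : Type*} [AddCommGroup X] [Module ℂ X] [FiniteDimensional ℂ X]
    (d n : ℕ) (hd : Module.finrank ℂ X = d) (hd1 : 1 ≤ d) (hdn : d ≤ n) (hn2 : 2 ≤ n)
    (τ : Fin n → X) (f : Fin n → Module.Dual ℂ X)
    (hone : ∀ j, f j (τ j) = 1)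
    (S : X →ₗ[ℂ] X) (hS : S = ∑ j, LinearMap.smulRight (f j) (τ j))
    (hdiag : ∃ (b : Module.Basis (Fin d) ℂ X) (lam : Fin d → ℝ),
      (∀ i, 0 ≤ lam i) ∧ ∀ i, S (b i) = (lam i : ℂ) • b i)
    (p : ℝ) (hp : 2 < p) :
    (n : ℝ) * ((n : ℝ) - 1) * (((n : ℝ) - d) / (d * ((n : ℝ) - 1))) ^ (p / 2) + n ≤
      ∑ j, ∑ k, ‖f j (τ k) * f k (τ j)‖ ^ (p / 2) :=
  welch_pth_power_general d n hd1 hdn τ f hone S hS hdiag p hp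
end

section
/- Let H be a d-dimensional complex inner product space and τ_1,…,τ_n ∈ H unit vectors with n ≥ d. Then Σ_{j=1}^n Σ_{k=1}^n |⟨τ_j, τ_k⟩|^2 ≥ n^2/d, with equality if and only if the frame operator S h = Σ_j ⟨h, τ_j⟩ τ_j is a scalar multiple of the identity. -/
/-!
The frame operator `S` is self-adjoint, with `tr S = ∑ ‖τ_j‖² = n` and
`tr S² = ∑_{j,k} |⟪τ_j, τ_k⟫|²`. For the mean eigenvalue `c = tr S / d`,
`tr (S - c)² = tr S² - (tr S)² / d`, and `tr (S - c)² = ∑_i ‖(S - c) e_i‖²` in any orthonormal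
basis `(e_i)`, so it is nonnegative and vanishes exactly when `S = c`.
-/

open scoped InnerProductSpace
open Module RCLike

namespace LinearMap

variable {𝕜 E : Type*} [RCLike 𝕜] [NormedAddCommGroup E] [InnerProductSpace 𝕜 E]

theorem IsSymmetric.re_trace_mul_self_eq_sum_norm_sq {ι : Type*} [Fintype ι] {T : E →ₗ[𝕜] E}
    (hT : T.IsSymmetric) (b : OrthonormalBasis ι 𝕜 E) :
    re (trace 𝕜 E (T * T)) = ∑ i, ‖T (b i)‖ ^ 2 := by
  simp only [trace_eq_sum_inner _ b, Module.End.mul_apply, ← hT _ (T _), map_sum,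
    inner_self_eq_norm_sq]

variable [FiniteDimensional 𝕜 E]

theorem IsSymmetric.re_trace_mul_self_nonneg {T : E →ₗ[𝕜] E} (hT : T.IsSymmetric) :
    0 ≤ re (trace 𝕜 E (T * T)) := by
  rw [hT.re_trace_mul_self_eq_sum_norm_sq (stdOrthonormalBasis 𝕜 E)]
  positivity

theorem IsSymmetric.re_trace_mul_self_eq_zero_iff {T : E →ₗ[𝕜] E} (hT : T.IsSymmetric) :
    re (trace 𝕜 E (T * T)) = 0 ↔ T = 0 := by
  set b := stdOrthonormalBasis 𝕜 E
  rw [hT.re_trace_mul_self_eq_sum_norm_sq b,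
    Finset.sum_eq_zero_iff_of_nonneg fun _ _ ↦ by positivity]
  simp only [Finset.mem_univ, true_implies, sq_eq_zero_iff, norm_eq_zero]
  exact ⟨fun h ↦ b.toBasis.ext fun i ↦ by simpa using h i, fun h i ↦ by simp [h]⟩

theorem IsSymmetric.ofReal_re_trace {T : E →ₗ[𝕜] E} (hT : T.IsSymmetric) :
    (re (trace 𝕜 E T) : 𝕜) = trace 𝕜 E T := by
  rw [hT.re_trace_eq_sum_eigenvalues rfl, hT.trace_eq_sum_eigenvalues rfl]

theorem re_trace_sub_smul_one_mul_self (T : E →ₗ[𝕜] E) (m : ℝ) :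
    re (trace 𝕜 E ((T - (m : 𝕜) • 1) * (T - (m : 𝕜) • 1))) =
      re (trace 𝕜 E (T * T)) - 2 * m * re (trace 𝕜 E T) + m ^ 2 * finrank 𝕜 E := by
  have : (T - (m : 𝕜) • 1) * (T - (m : 𝕜) • 1) = T * T - (2 * m : 𝕜) • T + (m ^ 2 : 𝕜) • 1 := by
    simp only [sub_mul, mul_sub, smul_mul_assoc, mul_smul_comm, one_mul, mul_one]
    module
  simp [this, trace_one]

/-- The mean eigenvalue of `T`. -/
noncomputable def meanTrace (T : E →ₗ[𝕜] E) : ℝ := re (trace 𝕜 E T) / finrank 𝕜 E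

theorem re_trace_sub_meanTrace_mul_self (T : E →ₗ[𝕜] E) :
    re (trace 𝕜 E ((T - (meanTrace T : 𝕜) • 1) * (T - (meanTrace T : 𝕜) • 1))) =
      re (trace 𝕜 E (T * T)) - re (trace 𝕜 E T) ^ 2 / finrank 𝕜 E := by
  rw [re_trace_sub_smul_one_mul_self, meanTrace]
  rcases eq_or_ne (finrank 𝕜 E : ℝ) 0 with hd | hd
  · simp [hd]
  · field_simp
    ring

theorem IsSymmetric.sq_re_trace_div_finrank_le {T : E →ₗ[𝕜] E} (hT : T.IsSymmetric) :
    re (trace 𝕜 E T) ^ 2 / finrank 𝕜 E ≤ re (trace 𝕜 E (T * T)) := by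
  have hnonneg :=
    (hT.sub (IsSymmetric.one.smul (conj_ofReal (meanTrace T)))).re_trace_mul_self_nonneg
  rw [re_trace_sub_meanTrace_mul_self] at hnonneg
  linarith

theorem IsSymmetric.re_trace_mul_self_eq_sq_div_finrank_iff {T : E →ₗ[𝕜] E}
    (hT : T.IsSymmetric) :
    re (trace 𝕜 E (T * T)) = re (trace 𝕜 E T) ^ 2 / finrank 𝕜 E ↔ ∃ c : 𝕜, T = c • 1 := by
  rw [← sub_eq_zero, ← re_trace_sub_meanTrace_mul_self,
    (hT.sub (IsSymmetric.one.smul (conj_ofReal _))).re_trace_mul_self_eq_zero_iff, sub_eq_zero]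
  refine ⟨fun h ↦ ⟨_, h⟩, ?_⟩
  rintro ⟨c, rfl⟩
  rcases eq_or_ne (finrank 𝕜 E) 0 with hd | hd
  · have : Subsingleton E := finrank_zero_iff.mp hd
    exact Subsingleton.elim _ _
  · rw [meanTrace, ofReal_div, hT.ofReal_re_trace]
    simp [trace_one, hd]

end LinearMap

section FrameOperator

open InnerProductSpace LinearMap

variable {𝕜 E ι : Type*} [RCLike 𝕜] [NormedAddCommGroup E] [InnerProductSpace 𝕜 E] [Fintype ι]

variable (𝕜) in
noncomputable def frameOperator (τ : ι → E) : E →ₗ[𝕜] E :=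
  ∑ j, (rankOne 𝕜 (τ j) (τ j) : E →ₗ[𝕜] E)

theorem frameOperator_apply (τ : ι → E) (h : E) :
    frameOperator 𝕜 τ h = ∑ j, ⟪τ j, h⟫_𝕜 • τ j := by
  simp [frameOperator]

variable (𝕜) in
theorem isSymmetric_frameOperator (τ : ι → E) : (frameOperator 𝕜 τ).IsSymmetric :=
  isSymmetric_sum _ fun j _ ↦ isSymmetric_rankOne_self (τ j)

variable [FiniteDimensional 𝕜 E]

theorem trace_frameOperator (τ : ι → E) :
    trace 𝕜 E (frameOperator 𝕜 τ) = ∑ j, (‖τ j‖ ^ 2 : 𝕜) := by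
  simp [frameOperator, trace_rankOne, inner_self_eq_norm_sq_to_K]

theorem trace_frameOperator_mul_self (τ : ι → E) :
    trace 𝕜 E (frameOperator 𝕜 τ * frameOperator 𝕜 τ) = ∑ j, ∑ k, (‖⟪τ j, τ k⟫_𝕜‖ ^ 2 : 𝕜) := by
  simp only [frameOperator, Finset.sum_mul_sum, Module.End.mul_eq_comp, map_sum]
  refine Finset.sum_congr rfl fun j _ ↦ Finset.sum_congr rfl fun k _ ↦ ?_
  rw [← ContinuousLinearMap.toLinearMap_comp, rankOne_comp_rankOne,
    ContinuousLinearMap.toLinearMap_smul, map_smul, trace_rankOne,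
    ← inner_conj_symm (τ k) (τ j), smul_eq_mul, mul_conj]

end FrameOperator

open LinearMap in
theorem welch_hilbert_first_order_general {H : Type*} [NormedAddCommGroup H]
    [InnerProductSpace ℂ H] [FiniteDimensional ℂ H]
    (d n : ℕ) (hd : Module.finrank ℂ H = d)
    (τ : Fin n → H) (hτ : ∀ j, ‖τ j‖ = 1) :
    ((n : ℝ) ^ 2 / d ≤ ∑ j, ∑ k, ‖⟪τ j, τ k⟫_ℂ‖ ^ 2) ∧
      ((∑ j, ∑ k, ‖⟪τ j, τ k⟫_ℂ‖ ^ 2 = (n : ℝ) ^ 2 / d) ↔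
        ∃ c : ℂ, ∀ h : H, ∑ j, ⟪τ j, h⟫_ℂ • τ j = c • h) := by
  have hS := isSymmetric_frameOperator ℂ τ
  have htrace : re (trace ℂ H (frameOperator ℂ τ)) = n := by simp [trace_frameOperator, hτ]
  have hpotential : re (trace ℂ H (frameOperator ℂ τ * frameOperator ℂ τ)) =
      ∑ j, ∑ k, ‖⟪τ j, τ k⟫_ℂ‖ ^ 2 := by
    rw [trace_frameOperator_mul_self]; norm_cast
  rw [← hpotential, ← htrace, ← hd]
  refine ⟨hS.sq_re_trace_div_finrank_le, ?_⟩
  simp only [hS.re_trace_mul_self_eq_sq_div_finrank_iff, LinearMap.ext_iff, frameOperator_apply,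
    LinearMap.smul_apply, Module.End.one_apply]

/-- First order discrete Welch bound in a `d`-dimensional complex Hilbert space, with the
tightness characterization: for unit vectors `τ_1, …, τ_n` with `n ≥ d`,
`∑_{j,k} |⟨τ_j, τ_k⟩|² ≥ n²/d`, with equality iff the frame operator is a scalar multiple
of the identity. -/
theorem welch_hilbert_first_order {H : Type*} [NormedAddCommGroup H]
    [InnerProductSpace ℂ H] [FiniteDimensional ℂ H]
    (d n : ℕ) (hd : Module.finrank ℂ H = d) (hd1 : 1 ≤ d) (hn : d ≤ n)
    (τ : Fin n → H) (hτ : ∀ j, ‖τ j‖ = 1) :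
    ((n : ℝ) ^ 2 / d ≤ ∑ j, ∑ k, ‖⟪τ j, τ k⟫_ℂ‖ ^ 2) ∧
      ((∑ j, ∑ k, ‖⟪τ j, τ k⟫_ℂ‖ ^ 2 = (n : ℝ) ^ 2 / d) ↔
        ∃ c : ℂ, ∀ h : H, ∑ j, ⟪τ j, h⟫_ℂ • τ j = c • h) :=
  welch_hilbert_first_order_general d n hd τ hτ
end
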